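/- arXiv:2512.00182 — 5 statements merged into one kernel-verified Lean document; each statement's English description precedes it below -/
import Mathlib

section
/- Fix a positive integer n. There exists a constant C = C(n) > 0 with the following property. Let d ∈ {1,2} and let Q be a nonnegative half-integer. Let p be the monic polynomial whose roots, each simple, are exactly the points s₀ ∈ ℂ with |Re(s₀)| ≤ n at which (d/2)(Q + 1/2 − s₀) is a nonpositive integer, and let p^∨ be the monic polynomial whose roots, each simple, are exactly the points s₀ ∈ ℂ with |Re(s₀)| ≤ n at which (d/2)(Q + 1/2 + s₀) is a nonpositive integer. Then for every s ∈ ℂ with |Re(s)| ≤ n such that neither (d/2)(Q + 1/2 − s) nor (d/2)(Q + 1/2 + s) is a nonpositive integer, one has |p(s) · Γ((d/2)(Q + 1/2 − s))| ≤ C · (1 + |p(s)|) · |Q + 1 + s + 2n|^{nd+2} · |p^∨(s) · Γ((d/2)(Q + 1/2 + s))|. -/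
/-!
The roots of `p` are the poles `z_k = Q + 1/2 + 2k/d`, `k < m`, of `Γ(a)`, `a = (d/2)(Q + 1/2 - s)`,
and those of `p^∨` are the `-z_k`, so telescoping `Γ(z + 1) = z Γ(z)` gives
`p(s) Γ(a) = (-2/d)^m Γ(a + m)` and `p^∨(s) Γ(b) = (2/d)^m Γ(b + m)`. Since `2 z_m` is an integer,
`z_m ≥ n + 1/2`, so `a + m` and `b + m` have real part `≥ 1/4`. They have opposite imaginary parts
and real parts differing by `d Re s`, so it remains to compare `Γ` at two points `z`, `w` of a
horizontal line with `|Re z - Re w| ≤ nd`. Moving to the right costs at most a constant factor,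
because `|Γ(z) / Γ(z + δ)| ≤ Γ(Re z) / Γ(Re z + δ)` (from the beta integral), and moving to the
left by an integer `M` costs the factor `|w (w + 1) ⋯ (w + M - 1)|`.
-/

open Complex Polynomial Finset

namespace Real

lemma Gamma_add_two {x : ℝ} (hx : 0 < x) : Gamma (x + 2) = (x + 1) * x * Gamma x := by
  rw [show x + 2 = x + 1 + 1 by ring, Gamma_add_one (by positivity), Gamma_add_one hx.ne',
    mul_assoc]

lemma one_div_six_le_Gamma {x : ℝ} (hx : 0 < x) : 1 / 6 ≤ Gamma x := by
  have hmono := Gamma_strictMonoOn_Ici.monotoneOn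
  rcases le_or_gt 2 x with h2 | h2
  · have : Gamma 2 ≤ Gamma x := hmono Set.self_mem_Ici h2 h2
    linarith [Gamma_two]
  · have h1 : 1 ≤ Gamma (x + 2) :=
      Gamma_two ▸ hmono Set.self_mem_Ici (by simp; linarith) (by linarith)
    have h6 : (x + 1) * x ≤ 6 := by nlinarith
    nlinarith [Gamma_add_two hx, mul_le_mul_of_nonneg_right h6 (Gamma_pos_of_pos hx).le]

lemma Gamma_le_mul_Gamma_add {x δ : ℝ} (hx : 1 / 4 ≤ x) (hδ : 0 ≤ δ) :
    Gamma x ≤ 120 * Gamma (x + δ) := by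
  have hmono := Gamma_strictMonoOn_Ici.monotoneOn
  have hlow := one_div_six_le_Gamma (show 0 < x + δ by linarith)
  rcases le_or_gt 2 x with h2 | h2
  · have : Gamma x ≤ Gamma (x + δ) := hmono h2 (by simp; linarith) (by linarith)
    linarith
  · -- `Γ x = Γ (x + 2) / (x (x + 1)) < 6 / (5 / 16) < 20`, while `Γ (x + δ) ≥ 1 / 6`
    have h6 : Gamma (x + 2) ≤ 6 := by
      have : Gamma (x + 2) ≤ Gamma ((3 : ℕ) + 1) :=
        hmono (by simp; linarith) (by norm_num) (by norm_num; linarith)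
      rwa [Gamma_nat_eq_factorial] at this
    have hx' : 5 / 16 ≤ (x + 1) * x := by nlinarith
    nlinarith [Gamma_add_two (show 0 < x by linarith),
      mul_le_mul_of_nonneg_right hx' (Gamma_pos_of_pos (show 0 < x by linarith)).le]

end Real

lemma ascPochhammer_eval_eq_prod_range {R : Type*} [CommSemiring R] (n : ℕ) (r : R) :
    (ascPochhammer R n).eval r = ∏ k ∈ range n, (r + k) := by
  induction n with
  | zero => simp
  | succ n ih => simp [ascPochhammer_succ_right, ih, prod_range_succ]

namespace Complex

lemma norm_cpow_ofReal_le {t : ℝ} (ht : 0 ≤ t) (w : ℂ) : ‖(t : ℂ) ^ w‖ ≤ t ^ w.re := by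
  simpa [arg_ofReal_of_nonneg ht, abs_of_nonneg ht] using norm_cpow_le (t : ℂ) w

lemma norm_betaIntegral_le {u v : ℂ} (hu : 0 < u.re) (hv : 0 < v.re) :
    ‖betaIntegral u v‖ ≤ ‖betaIntegral u.re v.re‖ := by
  set g : ℝ → ℝ := fun t => t ^ (u.re - 1) * (1 - t) ^ (v.re - 1)
  have hg_nonneg : ∀ t ∈ Set.Icc (0 : ℝ) 1, 0 ≤ g t := fun t ht =>
    mul_nonneg (Real.rpow_nonneg ht.1 _) (Real.rpow_nonneg (by linarith [ht.2]) _)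
  have hreal : ∀ t ∈ Set.uIcc (0 : ℝ) 1,
      (t : ℂ) ^ ((u.re : ℂ) - 1) * (1 - (t : ℂ)) ^ ((v.re : ℂ) - 1) = g t := by
    intro t ht
    rw [Set.uIcc_of_le zero_le_one] at ht
    simp only [g, ofReal_mul, ofReal_cpow ht.1, ofReal_cpow (by linarith [ht.2] : 0 ≤ 1 - t)]
    push_cast
    rfl
  have hg_int : IntervalIntegrable g MeasureTheory.volume 0 1 := by
    refine (intervalIntegrable_congr fun t ht => ?_).mp
      (betaIntegral_convergent (u := u.re) (v := v.re) hu hv).norm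
    have ht' := Set.uIoc_subset_uIcc ht
    rw [hreal t ht', norm_real, Real.norm_of_nonneg]
    exact hg_nonneg t (by rwa [Set.uIcc_of_le zero_le_one] at ht')
  have hg : betaIntegral u.re v.re = ((∫ t in (0 : ℝ)..1, g t : ℝ) : ℂ) := by
    rw [betaIntegral, intervalIntegral.integral_congr hreal, intervalIntegral.integral_ofReal]
  rw [hg, norm_real, Real.norm_of_nonneg
    (intervalIntegral.integral_nonneg zero_le_one hg_nonneg)]
  refine (intervalIntegral.norm_integral_le_integral_norm zero_le_one).trans
    (intervalIntegral.integral_mono_on zero_le_one (betaIntegral_convergent hu hv).norm hg_int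
      fun t ht => ?_)
  rw [norm_mul]
  have h1t : 0 ≤ 1 - t := by linarith [ht.2]
  have h1 := norm_cpow_ofReal_le ht.1 (u - 1)
  have h2 := norm_cpow_ofReal_le h1t (v - 1)
  push_cast at h2
  simp only [sub_re, one_re] at h1 h2
  exact mul_le_mul h1 h2 (norm_nonneg _) (Real.rpow_nonneg ht.1 _)

lemma norm_Gamma_mul_Gamma_re_add_le {z : ℂ} {δ : ℝ} (hz : 0 < z.re) (hδ : 0 < δ) :
    ‖Gamma z‖ * Real.Gamma (z.re + δ) ≤ Real.Gamma z.re * ‖Gamma (z + δ)‖ := by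
  have hδ' : 0 < (δ : ℂ).re := by simpa using hδ
  have hΓδ := Real.Gamma_pos_of_pos hδ
  have hΓxδ := Real.Gamma_pos_of_pos (add_pos hz hδ)
  have hΓzδ : 0 < ‖Gamma (z + δ)‖ :=
    norm_pos_iff.mpr (Gamma_ne_zero_of_re_pos (by simpa using add_pos hz hδ))
  -- `Γ z Γ δ = Γ (z + δ) B(z, δ)` and `‖B(z, δ)‖ ≤ B(Re z, δ)`
  have hB := norm_betaIntegral_le hz hδ'
  rw [betaIntegral_eq_Gamma_mul_div _ _ hz hδ',
    betaIntegral_eq_Gamma_mul_div _ _ (by simpa) (by simpa), ofReal_re, ← ofReal_add,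
    Gamma_ofReal, Gamma_ofReal, Gamma_ofReal, norm_div, norm_mul, norm_div, norm_mul,
    norm_real, norm_real, norm_real, Real.norm_of_nonneg hΓδ.le,
    Real.norm_of_nonneg hΓxδ.le, Real.norm_of_nonneg (Real.Gamma_pos_of_pos hz).le,
    div_le_div_iff₀ hΓzδ hΓxδ] at hB
  nlinarith

lemma norm_Gamma_le_mul_norm_Gamma_add {z : ℂ} {δ : ℝ} (hz : 1 / 4 ≤ z.re) (hδ : 0 ≤ δ) :
    ‖Gamma z‖ ≤ 120 * ‖Gamma (z + δ)‖ := by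
  rcases hδ.eq_or_lt with rfl | hδ
  · simp only [ofReal_zero, add_zero]
    linarith [norm_nonneg (Gamma z)]
  have hx : 0 < z.re := by linarith
  have hpos := Real.Gamma_pos_of_pos (add_pos hx hδ)
  refine le_of_mul_le_mul_right ?_ hpos
  calc ‖Gamma z‖ * Real.Gamma (z.re + δ) ≤ Real.Gamma z.re * ‖Gamma (z + δ)‖ :=
        norm_Gamma_mul_Gamma_re_add_le hx hδ
    _ ≤ 120 * Real.Gamma (z.re + δ) * ‖Gamma (z + δ)‖ := by
        gcongr
        exact Real.Gamma_le_mul_Gamma_add hz hδ.le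
    _ = _ := by ring

lemma Gamma_add_nat_eq_prod_mul_Gamma {z : ℂ} (hz : ∀ k : ℕ, z ≠ -k) (n : ℕ) :
    Gamma (z + n) = (∏ k ∈ range n, (z + k)) * Gamma z := by
  rw [← ascPochhammer_eval_eq_prod_range, ← Gamma_add_nat_div_Gamma_eq z hz,
    div_mul_cancel₀ _ (Gamma_ne_zero hz)]

lemma norm_Gamma_add_nat_le {w : ℂ} (hw : 0 < w.re) (n : ℕ) :
    ‖Gamma (w + n)‖ ≤ (‖w‖ + n) ^ n * ‖Gamma w‖ := by
  have hw' : ∀ k : ℕ, w ≠ -k := fun k hk => by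
    have := congrArg re hk
    simp at this
    linarith [(Nat.cast_nonneg k : (0 : ℝ) ≤ k)]
  rw [Gamma_add_nat_eq_prod_mul_Gamma hw', norm_mul, norm_prod]
  gcongr
  refine (prod_le_prod (fun _ _ => norm_nonneg _) fun k hk => ?_).trans_eq
    (by rw [prod_const, card_range])
  refine (norm_add_le _ _).trans ?_
  simp only [norm_natCast]
  gcongr
  exact (mem_range.mp hk).le

lemma norm_Gamma_le_of_im_eq {z w : ℂ} {N : ℕ} (him : z.im = w.im) (hz : 1 / 4 ≤ z.re)
    (hw : 1 / 4 ≤ w.re) (hN : |z.re - w.re| ≤ N) :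
    ‖Gamma z‖ ≤ 120 * (‖w‖ + N + 1) ^ N * ‖Gamma w‖ := by
  have hbase : 1 ≤ ‖w‖ + N + 1 := by linarith [norm_nonneg w, (Nat.cast_nonneg N : (0 : ℝ) ≤ N)]
  rcases le_or_gt z.re w.re with hle | hlt
  · have hzw : z + ((w.re - z.re : ℝ) : ℂ) = w := by apply Complex.ext <;> simp [him]
    calc ‖Gamma z‖ ≤ 120 * ‖Gamma w‖ := hzw ▸ norm_Gamma_le_mul_norm_Gamma_add hz (by linarith)
      _ ≤ 120 * (‖w‖ + N + 1) ^ N * ‖Gamma w‖ := by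
        rw [mul_assoc]
        gcongr
        exact le_mul_of_one_le_left (norm_nonneg _) (one_le_pow₀ hbase)
  · -- ascend from `z` to the nearest point `w + M` with `M ∈ ℕ`, then descend to `w`
    set M := ⌈z.re - w.re⌉₊
    have hM : z.re - w.re ≤ M := Nat.le_ceil _
    have hMN : M ≤ N := Nat.ceil_le.mpr (le_of_abs_le hN)
    have hzw : z + ((M - (z.re - w.re) : ℝ) : ℂ) = w + M := by
      apply Complex.ext <;> simp [him]; ring
    calc ‖Gamma z‖ ≤ 120 * ‖Gamma (w + M)‖ :=
          hzw ▸ norm_Gamma_le_mul_norm_Gamma_add hz (by linarith)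
      _ ≤ 120 * ((‖w‖ + M) ^ M * ‖Gamma w‖) := by
          gcongr
          exact norm_Gamma_add_nat_le (by linarith) M
      _ ≤ 120 * (‖w‖ + N + 1) ^ N * ‖Gamma w‖ := by
          rw [← mul_assoc]
          gcongr
          have : (M : ℝ) ≤ N := by exact_mod_cast hMN
          calc (‖w‖ + M) ^ M ≤ (‖w‖ + N + 1) ^ M := pow_le_pow_left₀ (by positivity) (by linarith) M
            _ ≤ _ := pow_le_pow_right₀ hbase hMN

end Complex

lemma Polynomial.eval_eq_prod_sub_of_isRoot_iff {K : Type*} [Field K] [IsAlgClosed K] {p : K[X]}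
    (hm : p.Monic) (hsf : Squarefree p) {S : Finset K} (hS : ∀ z, p.IsRoot z ↔ z ∈ S) (x : K) :
    p.eval x = ∏ z ∈ S, (x - z) := by
  have hroots : p.roots = S.val := by
    refine Multiset.Nodup.ext (nodup_roots (PerfectField.separable_iff_squarefree.mpr hsf))
      S.nodup |>.mpr fun z => ?_
    rw [mem_roots hm.ne_zero, hS, Finset.mem_val]
  rw [(IsAlgClosed.splits p).eval_eq_prod_roots_of_monic hm, hroots]
  rfl

/-- If the roots of the monic squarefree `p` are the first `m` poles of `Γ ∘ ℓ`, with `ℓ` affine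
of slope `α`, then `p` cancels these poles. -/
lemma Polynomial.eval_mul_Gamma_eq {p : ℂ[X]} (hm : p.Monic) (hsf : Squarefree p)
    {ℓ : ℂ → ℂ} {α β : ℂ} (hα : α ≠ 0) (hℓ : ∀ z, ℓ z = α * z + β) {m : ℕ}
    (hroots : ∀ z, p.IsRoot z ↔ ∃ k < m, ℓ z = -k) {s : ℂ} (hs : ∀ k : ℕ, ℓ s ≠ -k) :
    p.eval s * Gamma (ℓ s) = α⁻¹ ^ m * Gamma (ℓ s + m) := by
  set r : ℕ → ℂ := fun k => (-k - β) / α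
  have hr : ∀ z (k : ℕ), ℓ z = -k ↔ z = r k := fun z k => by
    rw [hℓ, eq_div_iff hα]
    constructor <;> intro h <;> linear_combination h
  have hr_inj : Set.InjOn r (range m) := fun j _ k _ hjk => by
    simpa [r, div_left_inj' hα] using hjk
  have hS : ∀ z, p.IsRoot z ↔ z ∈ (range m).image r := fun z => by
    simp only [hroots, hr, mem_image, mem_range, eq_comm (a := z)]
  rw [eval_eq_prod_sub_of_isRoot_iff hm hsf hS, prod_image hr_inj,
    Gamma_add_nat_eq_prod_mul_Gamma hs, ← mul_assoc, pow_eq_prod_const, ← prod_mul_distrib]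
  congr 1
  refine prod_congr rfl fun k _ => ?_
  simp only [r, hℓ]
  field_simp
  ring

lemma Polynomial.eval_mul_Gamma_eq_of_strip {p : ℂ[X]} (hm : p.Monic) (hsf : Squarefree p)
    {ℓ : ℂ → ℂ} {c u ε ρ : ℝ} (hc : 0 < c) (hu : 0 ≤ u) (hε : |ε| = 1)
    (hℓ : ∀ z, ℓ z = c * (u + ε * z)) {m : ℕ} (hρ : ∀ k : ℕ, u + k / c ≤ ρ ↔ k < m)
    (hroots : ∀ z, p.IsRoot z ↔ |z.re| ≤ ρ ∧ ∃ k : ℕ, ℓ z = -k) {s : ℂ}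
    (hs : ¬ ∃ k : ℕ, ℓ s = -k) :
    p.eval s * Gamma (ℓ s) = ((c * ε : ℝ) : ℂ)⁻¹ ^ m * Gamma (ℓ s + m) := by
  have hpole : ∀ z (k : ℕ), ℓ z = -k → |z.re| = u + k / c := fun z k hk => by
    have h := congrArg re ((hℓ z).symm.trans hk)
    simp only [add_re, ofReal_re, neg_re, natCast_re, mul_re, ofReal_im,
      zero_mul, sub_zero] at h
    have hεz : ε * z.re = -(u + k / c) := by
      field_simp
      linarith
    rw [← one_mul |z.re|, ← hε, ← abs_mul, hεz, abs_neg, abs_of_nonneg (by positivity)]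
  have hε0 : ε ≠ 0 := by
    rintro rfl
    simp at hε
  refine eval_mul_Gamma_eq hm hsf (β := c * u) (by simp [hc.ne', hε0])
    (fun z => by rw [hℓ]; push_cast; ring) (fun z => ?_) fun k hk => hs ⟨k, hk⟩
  rw [hroots]
  constructor
  · rintro ⟨hre, k, hk⟩
    exact ⟨k, (hρ k).mp (hpole z k hk ▸ hre), hk⟩
  · rintro ⟨k, hkm, hk⟩
    exact ⟨hpole z k hk ▸ (hρ k).mpr hkm, k, hk⟩

lemma norm_Gamma_le_of_strip {n d m : ℕ} (hd : d = 1 ∨ d = 2) {Q : ℝ} (hQ : 0 ≤ Q)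
    (hmn : m ≤ n + 1) (hlat : n + 1 / 2 ≤ Q + 1 / 2 + m / ((d : ℝ) / 2)) {s : ℂ}
    (hs : |s.re| ≤ n) :
    ‖Gamma ((d : ℂ) / 2 * ((Q : ℂ) + 1 / 2 - s) + m)‖ ≤
      120 * 25 ^ n * ‖(Q : ℂ) + 1 + s + 2 * (n : ℂ)‖ ^ (n * d + 2) *
        ‖Gamma ((d : ℂ) / 2 * ((Q : ℂ) + 1 / 2 + s) + m)‖ := by
  set z := (d : ℂ) / 2 * ((Q : ℂ) + 1 / 2 - s) + m
  set w := (d : ℂ) / 2 * ((Q : ℂ) + 1 / 2 + s) + m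
  set R := ‖(Q : ℂ) + 1 + s + 2 * (n : ℂ)‖
  have hd1 : (1 : ℝ) ≤ d ∧ (d : ℝ) ≤ 2 := by rcases hd with rfl | rfl <;> norm_num
  have hzre : z.re = d / 2 * (Q + 1 / 2 - s.re) + m := by simp [z]
  have hwre : w.re = d / 2 * (Q + 1 / 2 + s.re) + m := by simp [w]
  have hzim : z.im = -(d / 2 * s.im) := by simp [z]
  have hwim : w.im = d / 2 * s.im := by simp [w]
  have hσ := abs_le.mp hs
  have hm : (m : ℝ) = d / 2 * (m / (d / 2)) := by
    have : (d : ℝ) ≠ 0 := by linarith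
    field_simp
  have hz : 1 / 4 ≤ z.re := by rw [hzre]; nlinarith
  have hw : 1 / 4 ≤ (starRingEnd ℂ w).re := by rw [conj_re, hwre]; nlinarith
  have hN : |z.re - (starRingEnd ℂ w).re| ≤ (n * d : ℕ) := by
    rw [conj_re, hzre, hwre, show d / 2 * (Q + 1 / 2 - s.re) + m - (d / 2 * (Q + 1 / 2 + s.re) + m)
      = -(d * s.re) by ring, abs_neg, abs_mul, Nat.abs_cast]
    push_cast
    nlinarith
  have key := norm_Gamma_le_of_im_eq (by simp [hzim, hwim]) hz hw hN
  rw [Gamma_conj, Complex.norm_conj, Complex.norm_conj] at key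
  have hR : Q + n + 1 ≤ R := by
    refine le_trans ?_ (re_le_norm _)
    simp
    linarith
  have hIm : |s.im| ≤ R := by simpa using abs_im_le_norm ((Q : ℂ) + 1 + s + 2 * (n : ℂ))
  have hnd : n * d ≤ 2 * n := by rcases hd with rfl | rfl <;> omega
  have hwR : ‖w‖ + (n * d : ℕ) + 1 ≤ 5 * R := by
    have h := norm_le_abs_re_add_abs_im w
    rw [abs_of_nonneg (by linarith [conj_re w ▸ hw]), hwre, hwim, abs_mul,
      abs_of_nonneg (by positivity : 0 ≤ (d : ℝ) / 2)] at h
    have : ((n * d : ℕ) : ℝ) ≤ 2 * n := by exact_mod_cast hnd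
    have : (m : ℝ) ≤ n + 1 := by exact_mod_cast hmn
    nlinarith [abs_nonneg s.im]
  have h5 : (5 : ℝ) ^ (n * d) ≤ 25 ^ n := by
    rw [show (25 : ℝ) = 5 ^ 2 by norm_num, ← pow_mul]
    exact pow_le_pow_right₀ (by norm_num) (by omega)
  have hR2 : R ^ (n * d) ≤ R ^ (n * d + 2) := pow_le_pow_right₀ (by linarith) (by omega)
  calc ‖Gamma z‖ ≤ 120 * (‖w‖ + (n * d : ℕ) + 1) ^ (n * d) * ‖Gamma w‖ := key
    _ ≤ 120 * (5 * R) ^ (n * d) * ‖Gamma w‖ := by gcongr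
    _ = 120 * 5 ^ (n * d) * R ^ (n * d) * ‖Gamma w‖ := by ring
    _ ≤ 120 * 25 ^ n * R ^ (n * d + 2) * ‖Gamma w‖ := by gcongr

lemma Monotone.exists_forall_le_iff_lt {α : Type*} [LinearOrder α] {f : ℕ → α}
    (hf : Monotone f) {a : α} (h : ∃ k, a < f k) : ∃ m, ∀ k, f k ≤ a ↔ k < m := by
  classical
  refine ⟨Nat.find h, fun k => ?_⟩
  rw [Nat.lt_find_iff]
  exact ⟨fun hk j hj => not_lt.mpr ((hf hj).trans hk), fun H => not_lt.mp (H k le_rfl)⟩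

lemma exists_poles_in_strip {n d : ℕ} (hd : d = 1 ∨ d = 2) (q : ℕ) :
    ∃ m : ℕ, (∀ k : ℕ, (q : ℝ) / 2 + 1 / 2 + k / ((d : ℝ) / 2) ≤ n ↔ k < m) ∧ m ≤ n + 1 ∧
      n + 1 / 2 ≤ (q : ℝ) / 2 + 1 / 2 + m / ((d : ℝ) / 2) := by
  have hd2 : (d : ℝ) / 2 ≤ 1 := by rcases hd with rfl | rfl <;> norm_num
  have hgrowth : ∀ k : ℕ, (k : ℝ) ≤ k / ((d : ℝ) / 2) := fun k =>
    (le_div_iff₀ (by rcases hd with rfl | rfl <;> norm_num)).mpr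
      (mul_le_of_le_one_right k.cast_nonneg hd2)
  have hout : (n : ℝ) < (q : ℝ) / 2 + 1 / 2 + (n + 1 : ℕ) / ((d : ℝ) / 2) := by
    have := hgrowth (n + 1)
    push_cast at this ⊢
    linarith [(q.cast_nonneg : (0 : ℝ) ≤ q)]
  obtain ⟨m, hm⟩ := Monotone.exists_forall_le_iff_lt
    (f := fun k : ℕ => (q : ℝ) / 2 + 1 / 2 + k / ((d : ℝ) / 2)) (fun j k hjk => by
      rcases hd with rfl | rfl <;> simp only <;> gcongr) ⟨n + 1, hout⟩
  refine ⟨m, hm, not_lt.mp fun h => (hm (n + 1)).mpr h |>.not_gt hout, ?_⟩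
  -- `2 (q / 2 + 1 / 2 + m / (d / 2))` is an integer exceeding `2 n`
  have hgt : (n : ℝ) < q / 2 + 1 / 2 + m / ((d : ℝ) / 2) := not_le.mp ((hm m).not.mpr (lt_irrefl m))
  obtain ⟨j, hj⟩ : ∃ j : ℕ, (j : ℝ) = 2 * (q / 2 + 1 / 2 + m / ((d : ℝ) / 2)) := by
    rcases hd with rfl | rfl
    · exact ⟨q + 1 + 4 * m, by push_cast; ring⟩
    · exact ⟨q + 1 + 2 * m, by push_cast; ring⟩
  have : 2 * n + 1 ≤ j := by exact_mod_cast (by linarith : (2 * n : ℝ) < j)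
  have : (2 * n + 1 : ℝ) ≤ j := by exact_mod_cast this
  linarith

theorem stmt_0_general (n : ℕ) :
    ∃ C : ℝ, 0 < C ∧
      ∀ (d : ℕ), (d = 1 ∨ d = 2) →
      ∀ (Q : ℝ), (∃ m : ℕ, Q = m / 2) →
      ∀ p pv : Polynomial ℂ,
        p.Monic → Squarefree p →
        (∀ z : ℂ, p.IsRoot z ↔
          (|z.re| ≤ (n : ℝ) ∧ ∃ k : ℕ, (d : ℂ) / 2 * ((Q : ℂ) + 1/2 - z) = -(k : ℂ))) →
        pv.Monic → Squarefree pv →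
        (∀ z : ℂ, pv.IsRoot z ↔
          (|z.re| ≤ (n : ℝ) ∧ ∃ k : ℕ, (d : ℂ) / 2 * ((Q : ℂ) + 1/2 + z) = -(k : ℂ))) →
        ∀ s : ℂ, |s.re| ≤ (n : ℝ) →
          (¬ ∃ k : ℕ, (d : ℂ) / 2 * ((Q : ℂ) + 1/2 - s) = -(k : ℂ)) →
          (¬ ∃ k : ℕ, (d : ℂ) / 2 * ((Q : ℂ) + 1/2 + s) = -(k : ℂ)) →
          ‖p.eval s * Complex.Gamma ((d : ℂ) / 2 * ((Q : ℂ) + 1/2 - s))‖ ≤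
            C * (1 + ‖p.eval s‖) * ‖(Q : ℂ) + 1 + s + 2 * (n : ℂ)‖ ^ (n * d + 2) *
              ‖pv.eval s * Complex.Gamma ((d : ℂ) / 2 * ((Q : ℂ) + 1/2 + s))‖ := by
  refine ⟨120 * 25 ^ n, by positivity, ?_⟩
  rintro d hd _ ⟨q, rfl⟩ p pv hpm hpsf hproots hpvm hpvsf hpvroots s hs hreg hreg'
  have hc : (0 : ℝ) < d / 2 := by rcases hd with rfl | rfl <;> norm_num
  obtain ⟨m, hm, hmn, hlat⟩ := exists_poles_in_strip hd q
  have hP := eval_mul_Gamma_eq_of_strip hpm hpsf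
    (ℓ := fun z => (d : ℂ) / 2 * (((q / 2 : ℝ) : ℂ) + 1 / 2 - z)) (ε := -1) hc (by positivity)
    (by simp) (fun z => by push_cast; ring) hm hproots hreg
  have hPv := eval_mul_Gamma_eq_of_strip hpvm hpvsf
    (ℓ := fun z => (d : ℂ) / 2 * (((q / 2 : ℝ) : ℂ) + 1 / 2 + z)) (ε := 1) hc (by positivity)
    (by simp) (fun z => by push_cast; ring) hm hpvroots hreg'
  beta_reduce at hP hPv
  have hnorm : ‖(((d : ℝ) / 2 * -1 : ℝ) : ℂ)⁻¹ ^ m‖ = ‖(((d : ℝ) / 2 * 1 : ℝ) : ℂ)⁻¹ ^ m‖ := by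
    simp
  rw [hP, hPv, norm_mul, norm_mul, hnorm]
  set A := ‖(((d : ℝ) / 2 * 1 : ℝ) : ℂ)⁻¹ ^ m‖
  set R := ‖(((q / 2 : ℝ) : ℂ)) + 1 + s + 2 * (n : ℂ)‖
  set G := ‖Gamma ((d : ℂ) / 2 * (((q / 2 : ℝ) : ℂ) + 1 / 2 + s) + m)‖
  calc _ ≤ A * (120 * 25 ^ n * R ^ (n * d + 2) * G) := by
        gcongr
        exact norm_Gamma_le_of_strip hd (by positivity) hmn hlat hs
    _ = 120 * 25 ^ n * 1 * R ^ (n * d + 2) * (A * G) := by ring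
    _ ≤ 120 * 25 ^ n * (1 + ‖p.eval s‖) * R ^ (n * d + 2) * (A * G) := by
      gcongr
      exact le_add_of_nonneg_right (norm_nonneg _)

/-- Uniform bound for a ratio of Gamma factors, with monic
polynomials `p`, `pv` cancelling the poles of the two Gamma factors in the
strip `|Re s| ≤ n`. -/
theorem stmt_0 (n : ℕ) (hn : 0 < n) :
    ∃ C : ℝ, 0 < C ∧
      ∀ (d : ℕ), (d = 1 ∨ d = 2) →
      ∀ (Q : ℝ), (∃ m : ℕ, Q = m / 2) →
      ∀ p pv : Polynomial ℂ,
        p.Monic → Squarefree p →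
        (∀ z : ℂ, p.IsRoot z ↔
          (|z.re| ≤ (n : ℝ) ∧ ∃ k : ℕ, (d : ℂ) / 2 * ((Q : ℂ) + 1/2 - z) = -(k : ℂ))) →
        pv.Monic → Squarefree pv →
        (∀ z : ℂ, pv.IsRoot z ↔
          (|z.re| ≤ (n : ℝ) ∧ ∃ k : ℕ, (d : ℂ) / 2 * ((Q : ℂ) + 1/2 + z) = -(k : ℂ))) →
        ∀ s : ℂ, |s.re| ≤ (n : ℝ) →
          (¬ ∃ k : ℕ, (d : ℂ) / 2 * ((Q : ℂ) + 1/2 - s) = -(k : ℂ)) →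
          (¬ ∃ k : ℕ, (d : ℂ) / 2 * ((Q : ℂ) + 1/2 + s) = -(k : ℂ)) →
          ‖p.eval s * Complex.Gamma ((d : ℂ) / 2 * ((Q : ℂ) + 1/2 - s))‖ ≤
            C * (1 + ‖p.eval s‖) * ‖(Q : ℂ) + 1 + s + 2 * (n : ℂ)‖ ^ (n * d + 2) *
              ‖pv.eval s * Complex.Gamma ((d : ℂ) / 2 * ((Q : ℂ) + 1/2 + s))‖ :=
  stmt_0_general n
end

section
/- Fix a positive integer n. There exists a constant C = C(n) > 0 such that for every d ∈ {1,2}, every nonnegative half-integer Q, and every s ∈ ℂ with 0 ≤ Re(s) ≤ n satisfying Q ≥ 3n + 2 or |Im(s)| ≥ 1, one has |Γ((d/2)(Q + 1/2 − s))| ≤ C · |Q + 3/2 + s|² · |Γ((d/2)(Q + 1/2 + s))|. (Under the stated hypotheses neither (d/2)(Q + 1/2 − s) nor (d/2)(Q + 1/2 + s) is a nonpositive integer, so both Gamma values are finite and the right-hand Gamma value is nonzero.) -/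
/-!
With `A = d / 2` and `z = A (Q + 1/2 + s)`, the reflection `Γ(conj w) = conj Γ(w)` turns the
left-hand side into `‖Γ(z - x)‖` with `x = 2 A Re s ∈ [0, 2n]`. The hypothesis keeps every
`z - x + j` at distance at least `1/2` from `0` (through its real or its imaginary part), so the
functional equation moves `z - x` forward by `⌈x⌉ + 1` at a cost of at most `2` per step, landing
at `z + 2 - θ` with `0 < θ ≤ 1`. The last, fractional, step costs at most `2` as well, because
`Γ(v) Γ(θ) = Γ(v + θ) B(v, θ)` with `‖B(v, θ)‖ ≤ 1/θ` for `Re v ≥ 1`, and `θ Γ(θ) = Γ(θ + 1) ≥ 1/2`.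
Finally `Γ(z + 2) = (z + 1) z Γ(z)` and both `‖z‖`, `‖z + 1‖` are at most `‖Q + 3/2 + s‖`.
-/

open Complex ComplexConjugate MeasureTheory

lemma Complex.norm_betaIntegral_le_s1 {v : ℂ} (hv : 1 ≤ v.re) {θ : ℝ} (hθ : 0 < θ) :
    ‖betaIntegral v θ‖ ≤ 1 / θ := by
  have hbound : ∀ᵐ t ∂volume, t ∈ Set.Ioc (0 : ℝ) 1 →
      ‖(t : ℂ) ^ ((θ : ℂ) - 1) * (1 - (t : ℂ)) ^ (v - 1)‖ ≤ t ^ (θ - 1) := by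
    filter_upwards [volume.ae_ne 1] with t ht1 ht
    have h1t : 0 < 1 - t := sub_pos.2 (lt_of_le_of_ne ht.2 ht1)
    have hsub : (1 : ℂ) - t = ((1 - t : ℝ) : ℂ) := by push_cast; ring
    rw [norm_mul, norm_cpow_eq_rpow_re_of_pos ht.1, hsub, norm_cpow_eq_rpow_re_of_pos h1t]
    simp only [sub_re, ofReal_re, one_re]
    exact mul_le_of_le_one_right (Real.rpow_nonneg ht.1.le _)
      (Real.rpow_le_one h1t.le (by linarith [ht.1]) (by linarith))
  have hint : ∫ t in (0 : ℝ)..1, t ^ (θ - 1) = 1 / θ := by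
    rw [integral_rpow (Or.inl (by linarith))]
    simp [Real.zero_rpow hθ.ne']
  rw [← betaIntegral_symm, betaIntegral, ← hint]
  exact intervalIntegral.norm_integral_le_of_norm_le zero_le_one hbound
    (intervalIntegral.intervalIntegrable_rpow' (by linarith))

lemma Real.one_half_le_Gamma_add_one {θ : ℝ} (h0 : 0 ≤ θ) (h1 : θ ≤ 1) :
    1 / 2 ≤ Real.Gamma (θ + 1) := by
  have hmono : Real.Gamma 2 ≤ Real.Gamma (θ + 1 + 1) :=
    Real.Gamma_strictMonoOn_Ici.monotoneOn (Set.mem_Ici.2 le_rfl)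
      (Set.mem_Ici.2 (by linarith)) (by linarith)
  rw [Real.Gamma_two, Real.Gamma_add_one (by linarith)] at hmono
  rw [div_le_iff₀ two_pos]
  nlinarith [Real.Gamma_pos_of_pos (show 0 < θ + 1 by linarith)]

lemma Complex.norm_Gamma_mul_Gamma_add_one_le {v : ℂ} (hv : 1 ≤ v.re) {θ : ℝ} (hθ : 0 < θ) :
    ‖Gamma v‖ * Real.Gamma (θ + 1) ≤ ‖Gamma (v + θ)‖ := by
  have hrel := congrArg norm (Gamma_mul_Gamma_eq_betaIntegral (s := v) (t := θ)
    (by linarith) (by simpa using hθ))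
  rw [norm_mul, norm_mul, Gamma_ofReal, norm_real, Real.norm_of_nonneg
    (Real.Gamma_pos_of_pos hθ).le] at hrel
  rw [Real.Gamma_add_one hθ.ne', ← mul_assoc, mul_right_comm, hrel, mul_assoc]
  refine mul_le_of_le_one_right (norm_nonneg _) ?_
  calc ‖betaIntegral v θ‖ * θ ≤ 1 / θ * θ := by gcongr; exact norm_betaIntegral_le_s1 hv hθ
    _ = 1 := by field_simp

lemma Complex.norm_Gamma_le_two_mul_norm_Gamma_add {v : ℂ} (hv : 1 ≤ v.re) {θ : ℝ} (h0 : 0 < θ)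
    (h1 : θ ≤ 1) : ‖Gamma v‖ ≤ 2 * ‖Gamma (v + θ)‖ := by
  have := norm_Gamma_mul_Gamma_add_one_le hv h0
  nlinarith [Real.one_half_le_Gamma_add_one h0.le h1, norm_nonneg (Gamma v)]

lemma Complex.norm_Gamma_le_two_pow_mul_norm_Gamma_add_nat (u : ℂ) (k : ℕ)
    (h : ∀ j < k, 1 / 2 ≤ ‖u + j‖) : ‖Gamma u‖ ≤ 2 ^ k * ‖Gamma (u + k)‖ := by
  induction k with
  | zero => simp
  | succ k ih =>
    have hk : 1 / 2 ≤ ‖u + k‖ := h k k.lt_succ_self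
    have hne : u + k ≠ 0 := fun h0 => by norm_num [h0] at hk
    have hstep : ‖Gamma (u + k)‖ ≤ 2 * ‖Gamma (u + (k + 1 : ℕ))‖ := by
      rw [Nat.cast_succ, ← add_assoc, Gamma_add_one _ hne, norm_mul]
      nlinarith [norm_nonneg (Gamma (u + k))]
    calc ‖Gamma u‖ ≤ 2 ^ k * ‖Gamma (u + k)‖ := ih fun j hj => h j (by omega)
      _ ≤ 2 ^ k * (2 * ‖Gamma (u + (k + 1 : ℕ))‖) := by gcongr
      _ = 2 ^ (k + 1) * ‖Gamma (u + (k + 1 : ℕ))‖ := by ring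

lemma Complex.norm_le_norm_of_re_le_of_abs_im_le {a b : ℂ} (h0 : 0 ≤ a.re) (hre : a.re ≤ b.re)
    (him : |a.im| ≤ |b.im|) : ‖a‖ ≤ ‖b‖ := by
  rw [← sq_le_sq₀ (norm_nonneg a) (norm_nonneg b), Complex.sq_norm, Complex.sq_norm, normSq_apply,
    normSq_apply]
  nlinarith [sq_abs a.im, sq_abs b.im, abs_nonneg a.im]

lemma Complex.norm_Gamma_add_two (z : ℂ) (hz : 0 < z.re) :
    ‖Gamma (z + 2)‖ = ‖z + 1‖ * ‖z‖ * ‖Gamma z‖ := by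
  have hz0 : z ≠ 0 := fun h => by simp [h] at hz
  have hz1 : z + 1 ≠ 0 := fun h => by
    have := congrArg re h
    simp only [add_re, one_re, zero_re] at this
    linarith
  rw [show z + 2 = z + 1 + 1 by ring, Gamma_add_one _ hz1, Gamma_add_one _ hz0, norm_mul,
    norm_mul, mul_assoc]

lemma Complex.norm_Gamma_sub_le {z : ℂ} (hz : 0 < z.re) {x : ℝ} (hx : 0 ≤ x)
    (h : ∀ j ≤ ⌈x⌉₊, 1 / 2 ≤ ‖z - x + j‖) :
    ‖Gamma (z - x)‖ ≤ 2 ^ (⌈x⌉₊ + 2) * ‖z + 1‖ * ‖z‖ * ‖Gamma z‖ := by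
  set k := ⌈x⌉₊ + 1 with hk
  have hkx : x + 1 ≤ k := by push_cast [hk]; linarith [Nat.le_ceil x]
  have hxk : (k : ℝ) < x + 2 := by push_cast [hk]; linarith [Nat.ceil_lt_add_one hx]
  have hv : 1 ≤ (z - x + k).re := by simp only [add_re, sub_re, ofReal_re, natCast_re]; linarith
  have hfrac := norm_Gamma_le_two_mul_norm_Gamma_add hv (θ := x + 2 - k) (by linarith)
    (by linarith)
  rw [show z - x + k + ((x + 2 - k : ℝ) : ℂ) = z + 2 by push_cast; ring,
    norm_Gamma_add_two z hz] at hfrac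
  calc ‖Gamma (z - x)‖ ≤ 2 ^ k * ‖Gamma (z - x + k)‖ :=
        norm_Gamma_le_two_pow_mul_norm_Gamma_add_nat _ k fun j hj => h j (by omega)
    _ ≤ 2 ^ k * (2 * (‖z + 1‖ * ‖z‖ * ‖Gamma z‖)) := by gcongr
    _ = 2 ^ (⌈x⌉₊ + 2) * ‖z + 1‖ * ‖z‖ * ‖Gamma z‖ := by rw [hk]; ring

lemma norm_ofReal_mul_add_le {A Q c : ℝ} {s : ℂ} (hA0 : 0 ≤ A) (hA1 : A ≤ 1) (hQ : 0 ≤ Q)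
    (hs0 : 0 ≤ s.re) (hc0 : 0 ≤ c) (hc1 : c ≤ 1) :
    ‖A * ((Q : ℂ) + 1 / 2 + s) + c‖ ≤ ‖(Q : ℂ) + 3 / 2 + s‖ := by
  have hre : (A * ((Q : ℂ) + 1 / 2 + s) + c).re = A * (Q + 1 / 2 + s.re) + c := by simp
  have him : (A * ((Q : ℂ) + 1 / 2 + s) + c).im = A * s.im := by simp
  have hTre : ((Q : ℂ) + 3 / 2 + s).re = Q + 3 / 2 + s.re := by norm_num
  have hTim : ((Q : ℂ) + 3 / 2 + s).im = s.im := by simp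
  apply Complex.norm_le_norm_of_re_le_of_abs_im_le
  · rw [hre]; positivity
  · rw [hre, hTre]; nlinarith
  · rw [him, hTim, abs_mul, abs_of_nonneg hA0]
    exact mul_le_of_le_one_left (abs_nonneg _) hA1

lemma norm_Gamma_reflect_le {n : ℕ} {A Q : ℝ} {s : ℂ} (hA0 : 1 / 2 ≤ A) (hA1 : A ≤ 1)
    (hQ : 0 ≤ Q) (hs0 : 0 ≤ s.re) (hsn : s.re ≤ n) (hpole : s.re + 1 / 2 ≤ Q ∨ 1 ≤ |s.im|) :
    ‖Gamma (A * ((Q : ℂ) + 1 / 2 - s))‖ ≤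
      2 ^ (2 * n + 2) * ‖(Q : ℂ) + 3 / 2 + s‖ ^ 2 * ‖Gamma (A * ((Q : ℂ) + 1 / 2 + s))‖ := by
  set z : ℂ := A * ((Q : ℂ) + 1 / 2 + s)
  set x : ℝ := 2 * A * s.re
  have hzre : z.re = A * (Q + 1 / 2 + s.re) := by simp [z]
  have hzim : z.im = A * s.im := by simp [z]
  have hconj : conj (A * ((Q : ℂ) + 1 / 2 - s)) = z - x := by
    have hre := add_conj s
    simp only [map_mul, map_sub, map_add, conj_ofReal, map_div₀, map_one, map_ofNat, z, x]
    push_cast at hre ⊢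
    linear_combination -(A : ℂ) * hre
  have hx : 0 ≤ x := by positivity
  have hpoles : ∀ j ≤ ⌈x⌉₊, 1 / 2 ≤ ‖z - x + j‖ := by
    intro j _
    rcases hpole with hQs | him
    · refine le_trans ?_ (Complex.re_le_norm _)
      have hre : (z - x + j).re = A * (Q + 1 / 2 - s.re) + j := by
        simp only [add_re, sub_re, hzre, ofReal_re, natCast_re, x]; ring
      rw [hre]
      nlinarith [(Nat.cast_nonneg j : (0 : ℝ) ≤ j)]
    · refine le_trans ?_ (Complex.abs_im_le_norm _)
      simp only [add_im, sub_im, hzim, ofReal_im, natCast_im, sub_zero, add_zero, abs_mul,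
        abs_of_nonneg (by linarith : 0 ≤ A)]
      nlinarith
  have hceil : ⌈x⌉₊ ≤ 2 * n := Nat.ceil_le.2 (by push_cast; nlinarith)
  rw [← norm_conj, ← Gamma_conj, hconj]
  calc ‖Gamma (z - x)‖ ≤ 2 ^ (⌈x⌉₊ + 2) * ‖z + 1‖ * ‖z‖ * ‖Gamma z‖ :=
        norm_Gamma_sub_le (by rw [hzre]; positivity) hx hpoles
    _ ≤ 2 ^ (2 * n + 2) * ‖(Q : ℂ) + 3 / 2 + s‖ * ‖(Q : ℂ) + 3 / 2 + s‖ * ‖Gamma z‖ := by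
        gcongr
        · norm_num
        · simpa only [ofReal_one] using
            norm_ofReal_mul_add_le (by linarith) hA1 hQ hs0 zero_le_one le_rfl
        · simpa only [ofReal_zero, add_zero] using
            norm_ofReal_mul_add_le (by linarith) hA1 hQ hs0 le_rfl zero_le_one
    _ = _ := by ring

theorem stmt_1_general (n : ℕ) :
    ∃ C : ℝ, 0 < C ∧
      ∀ (d : ℕ), (d = 1 ∨ d = 2) →
      ∀ (Q : ℝ), (∃ m : ℕ, Q = m / 2) →
      ∀ s : ℂ, 0 ≤ s.re → s.re ≤ (n : ℝ) →
        (3 * (n : ℝ) + 2 ≤ Q ∨ 1 ≤ |s.im|) →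
        ‖Complex.Gamma ((d : ℂ) / 2 * ((Q : ℂ) + 1/2 - s))‖ ≤
          C * ‖(Q : ℂ) + 3/2 + s‖ ^ 2 *
            ‖Complex.Gamma ((d : ℂ) / 2 * ((Q : ℂ) + 1/2 + s))‖ := by
  refine ⟨2 ^ (2 * n + 2), by positivity, ?_⟩
  rintro d hd Q ⟨m, rfl⟩ s hs0 hsn hpole
  have hA : 1 / 2 ≤ (d : ℝ) / 2 ∧ (d : ℝ) / 2 ≤ 1 := by rcases hd with rfl | rfl <;> norm_num
  have := norm_Gamma_reflect_le (Q := m / 2) hA.1 hA.2 (by positivity) hs0 hsn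
    (hpole.imp_left fun h => by linarith)
  push_cast at this ⊢
  exact this

/-- Uniform bound for the ratio of Gamma factors on the strip
`0 ≤ Re s ≤ n`, provided `Q ≥ 3n+2` or `|Im s| ≥ 1`. -/
theorem stmt_1 (n : ℕ) (hn : 0 < n) :
    ∃ C : ℝ, 0 < C ∧
      ∀ (d : ℕ), (d = 1 ∨ d = 2) →
      ∀ (Q : ℝ), (∃ m : ℕ, Q = m / 2) →
      ∀ s : ℂ, 0 ≤ s.re → s.re ≤ (n : ℝ) →
        (3 * (n : ℝ) + 2 ≤ Q ∨ 1 ≤ |s.im|) →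
        ‖Complex.Gamma ((d : ℂ) / 2 * ((Q : ℂ) + 1/2 - s))‖ ≤
          C * ‖(Q : ℂ) + 3/2 + s‖ ^ 2 *
            ‖Complex.Gamma ((d : ℂ) / 2 * ((Q : ℂ) + 1/2 + s))‖ :=
  stmt_1_general n
end

section
/- Fix a positive integer n. There exists a constant C = C(n) > 0 such that for every d ∈ {1,2}, every nonnegative half-integer Q, and every s ∈ ℂ with |Re(s)| ≤ n satisfying Q ≥ 3n + 2 or |Im(s)| ≥ 1, one has |Γ((d/2)(Q + 1/2 − s))| ≤ C · |Q + 1 + s + 2n|^{nd+2} · |Γ((d/2)(Q + 1/2 + s))|. (Under the stated hypotheses neither (d/2)(Q + 1/2 − s) nor (d/2)(Q + 1/2 + s) is a nonpositive integer, so both Gamma values are finite and the right-hand Gamma value is nonzero.) -/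
/-!
Write `w = (d/2)(Q + 1/2 - s)` and `b = (d/2)(Q + 1/2 + s)`. Then `conj b = w + t` with
`t = d · Re s` real, and `‖Γ b‖ = ‖Γ (conj b)‖`. To the right of `Re = 2`, `‖Γ‖` does not decrease
along horizontal rays: comparing `Γ(u) Γ(τ) = Γ(u + τ) B(u, τ)` with the same identity at `Re u`
gives `‖B(u, τ)‖ ≤ B(Re u, τ) ≤ Γ(τ)`. Hence `‖Γ(w + k)‖ ≤ ‖Γ(conj b + k + m)‖` for
`k = 2n + 3` and `m = nd ≥ -t`. Unwinding both shifts with `Γ(z + 1) = z Γ(z)` leaves products of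
linear factors; the hypotheses keep every `‖w + j‖` at least `1/2`, so each ratio
`‖w + t + j‖ / ‖w + j‖` is at most `1 + 4n`, and the `m` extra factors are `O(‖Q + 1 + s + 2n‖)`.
-/

open Complex ComplexConjugate Finset

theorem Complex.Gamma_add_natCast_eq_mul_prod (z : ℂ) (m : ℕ) (h : ∀ j < m, z + j ≠ 0) :
    Gamma (z + m) = Gamma z * ∏ j ∈ range m, (z + j) := by
  induction m with
  | zero => simp
  | succ m ih =>
    rw [Nat.cast_succ, ← add_assoc, Gamma_add_one _ (h m m.lt_succ_self),
      ih fun j hj => h j (hj.trans m.lt_succ_self), prod_range_succ]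
    ring

theorem Complex.norm_betaIntegral_le_s2 (u v : ℂ) :
    ‖betaIntegral u v‖ ≤ (betaIntegral u.re v.re).re := by
  set g : ℝ → ℝ := fun x => x ^ (u.re - 1) * (1 - x) ^ (v.re - 1)
  have hae : ∀ᵐ x : ℝ, x ∈ Set.uIoc (0 : ℝ) 1 → x ∈ Set.Ioo (0 : ℝ) 1 := by
    filter_upwards [MeasureTheory.Ioo_ae_eq_Ioc (a := (0 : ℝ)) (b := 1)] with x hx
    rw [Set.uIoc_of_le zero_le_one]
    exact fun h => hx.mpr h
  have hnorm : ∀ x ∈ Set.Ioo (0 : ℝ) 1, ‖(x : ℂ) ^ (u - 1) * (1 - (x : ℂ)) ^ (v - 1)‖ = g x := by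
    intro x hx
    rw [norm_mul, norm_cpow_eq_rpow_re_of_pos hx.1, ← ofReal_one, ← ofReal_sub,
      norm_cpow_eq_rpow_re_of_pos (sub_pos.2 hx.2)]
    simp [g]
  have hreal : betaIntegral u.re v.re = ((∫ x in (0 : ℝ)..1, g x : ℝ) : ℂ) := by
    rw [betaIntegral, ← intervalIntegral.integral_ofReal]
    refine intervalIntegral.integral_congr_ae ?_
    filter_upwards [hae] with x hx hmem
    obtain ⟨hx0, hx1⟩ := hx hmem
    rw [ofReal_mul, ofReal_cpow hx0.le, ofReal_cpow (sub_pos.2 hx1).le]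
    push_cast
    rfl
  rw [hreal, ofReal_re, betaIntegral]
  refine (intervalIntegral.norm_integral_le_integral_norm zero_le_one).trans_eq ?_
  refine intervalIntegral.integral_congr_ae ?_
  filter_upwards [hae] with x hx hmem
  exact hnorm x (hx hmem)

theorem Complex.norm_Gamma_le_norm_Gamma_add_ofReal {u : ℂ} (hu : 2 ≤ u.re) {τ : ℝ}
    (hτ : 0 ≤ τ) : ‖Gamma u‖ ≤ ‖Gamma (u + τ)‖ := by
  rcases hτ.eq_or_lt with rfl | hτ
  · simp
  have hu0 : 0 < u.re := by linarith
  have hΓτ : 0 < Real.Gamma τ := Real.Gamma_pos_of_pos hτ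
  have hbeta : ‖betaIntegral u τ‖ ≤ Real.Gamma τ := calc
    ‖betaIntegral u τ‖ ≤ (betaIntegral u.re τ).re := by simpa using norm_betaIntegral_le_s2 u τ
    _ = Real.Gamma u.re * Real.Gamma τ / Real.Gamma (u.re + τ) :=
        (ProbabilityTheory.beta_eq_betaIntegralReal _ _ hu0 hτ).symm
    _ ≤ Real.Gamma τ := by
        rw [div_le_iff₀ (Real.Gamma_pos_of_pos (by positivity)), mul_comm]
        refine mul_le_mul_of_nonneg_left ?_ hΓτ.le
        exact Real.Gamma_strictMonoOn_Ici.monotoneOn hu (by simp only [Set.mem_Ici]; linarith)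
          (by linarith)
  refine le_of_mul_le_mul_right ?_ hΓτ
  calc ‖Gamma u‖ * Real.Gamma τ = ‖Gamma u * Gamma τ‖ := by
        rw [norm_mul, Gamma_ofReal, norm_real, Real.norm_of_nonneg hΓτ.le]
    _ = ‖Gamma (u + τ)‖ * ‖betaIntegral u τ‖ := by
        rw [Gamma_mul_Gamma_eq_betaIntegral hu0 (by simpa), norm_mul]
    _ ≤ ‖Gamma (u + τ)‖ * Real.Gamma τ := by gcongr

theorem Complex.le_norm_add_natCast {z : ℂ} {δ : ℝ} (h : δ ≤ z.re ∨ δ ≤ |z.im|) (j : ℕ) :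
    δ ≤ ‖z + j‖ := by
  rcases h with h | h
  · calc δ ≤ (z + j).re := by simp only [add_re, natCast_re]; linarith [j.cast_nonneg (α := ℝ)]
      _ ≤ ‖z + j‖ := re_le_norm _
  · calc δ ≤ |(z + j).im| := by simpa using h
      _ ≤ ‖z + j‖ := abs_im_le_norm _

theorem Complex.norm_Gamma_le_mul_norm_Gamma_add_ofReal {w : ℂ} {t δ : ℝ} {k m : ℕ} (hδ : 0 < δ)
    (hk : 2 ≤ w.re + k) (htm : 0 ≤ t + m) (hw : ∀ j : ℕ, δ ≤ ‖w + j‖)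
    (hv : ∀ j : ℕ, w + t + j ≠ 0) :
    ‖Gamma w‖ ≤ (1 + |t| / δ) ^ k * (‖w + t‖ + (k + m)) ^ m * ‖Gamma (w + t)‖ := by
  set v := w + t
  have hw0 : ∀ j : ℕ, w + j ≠ 0 := fun j h => by linarith [hw j, norm_eq_zero.2 h]
  have hshift : ‖Gamma w‖ * ∏ j ∈ range k, ‖w + j‖ ≤ ‖Gamma v‖ * ∏ j ∈ range (k + m), ‖v + j‖ :=
    calc ‖Gamma w‖ * ∏ j ∈ range k, ‖w + j‖ = ‖Gamma (w + k)‖ := by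
          rw [Gamma_add_natCast_eq_mul_prod w k fun j _ => hw0 j, norm_mul, norm_prod]
      _ ≤ ‖Gamma (w + k + (t + m : ℝ))‖ :=
          norm_Gamma_le_norm_Gamma_add_ofReal (by simpa using hk) htm
      _ = ‖Gamma (v + (k + m : ℕ))‖ := by congr 2; simp only [v]; push_cast; ring
      _ = ‖Gamma v‖ * ∏ j ∈ range (k + m), ‖v + j‖ := by
          rw [Gamma_add_natCast_eq_mul_prod v _ fun j _ => hv j, norm_mul, norm_prod]
  have hhead : ∏ j ∈ range k, ‖v + j‖ ≤ (1 + |t| / δ) ^ k * ∏ j ∈ range k, ‖w + j‖ := by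
    rw [← card_range k, ← prod_const, card_range, ← prod_mul_distrib]
    refine prod_le_prod (fun j _ => norm_nonneg _) fun j _ => ?_
    calc ‖v + j‖ ≤ ‖w + j‖ + |t| := by
          simpa only [v, add_right_comm w, norm_real, Real.norm_eq_abs] using norm_add_le (w + j) t
      _ ≤ ‖w + j‖ + |t| / δ * ‖w + j‖ := by
          gcongr
          rw [div_mul_eq_mul_div, le_div_iff₀ hδ]
          exact mul_le_mul_of_nonneg_left (hw j) (abs_nonneg t)
      _ = (1 + |t| / δ) * ‖w + j‖ := by ring
  have htail : ∏ j ∈ range m, ‖v + (k + j : ℕ)‖ ≤ (‖v‖ + (k + m)) ^ m := by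
    rw [← card_range m, ← prod_const, card_range]
    refine prod_le_prod (fun j _ => norm_nonneg _) fun j hj => ?_
    calc ‖v + (k + j : ℕ)‖ ≤ ‖v‖ + (k + j : ℕ) := by
          simpa only [norm_natCast] using norm_add_le v ((k + j : ℕ) : ℂ)
      _ ≤ ‖v‖ + (k + m) := by push_cast; gcongr; exact (mem_range.1 hj).le
  refine le_of_mul_le_mul_right ?_ (prod_pos (s := range k) fun j _ => hδ.trans_le (hw j))
  calc ‖Gamma w‖ * ∏ j ∈ range k, ‖w + j‖
      ≤ ‖Gamma v‖ * ((∏ j ∈ range k, ‖v + j‖) * ∏ j ∈ range m, ‖v + (k + j : ℕ)‖) := by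
        rwa [← prod_range_add]
    _ ≤ ‖Gamma v‖ * (((1 + |t| / δ) ^ k * ∏ j ∈ range k, ‖w + j‖) * (‖v‖ + (k + m)) ^ m) := by
        gcongr
    _ = _ := by ring

theorem half_le_norm_mul_add_natCast {n : ℕ} {d Q : ℝ} {u : ℂ} (hd : 1 ≤ d) (hu : |u.re| ≤ n)
    (h : 3 * n + 2 ≤ Q ∨ 1 ≤ |u.im|) (j : ℕ) : 1 / 2 ≤ ‖(d / 2 : ℂ) * (Q + 1 / 2 + u) + j‖ := by
  refine le_norm_add_natCast ?_ j
  have hre : ((d / 2 : ℂ) * (Q + 1 / 2 + u)).re = d / 2 * (Q + 1 / 2 + u.re) := by simp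
  have him : ((d / 2 : ℂ) * (Q + 1 / 2 + u)).im = d / 2 * u.im := by simp
  rw [hre, him, abs_mul, abs_of_pos (by positivity : 0 < d / 2)]
  rcases h with h | h
  · left; nlinarith [abs_le.1 hu]
  · right; nlinarith

theorem norm_Gamma_half_mul_sub_le {n m : ℕ} {d Q : ℝ} {s : ℂ} (hd1 : 1 ≤ d) (hd2 : d ≤ 2)
    (hm : n * d ≤ m) (hQ : 0 ≤ Q) (hs : |s.re| ≤ n) (h : 3 * n + 2 ≤ Q ∨ 1 ≤ |s.im|) :
    ‖Gamma (d / 2 * (Q + 1 / 2 - s))‖ ≤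
      (1 + 4 * n) ^ (2 * n + 3) * (‖(d / 2 : ℂ) * (Q + 1 / 2 + s)‖ + (2 * n + 3 + m)) ^ m *
        ‖Gamma (d / 2 * (Q + 1 / 2 + s))‖ := by
  set w : ℂ := d / 2 * (Q + 1 / 2 - s)
  set b : ℂ := d / 2 * (Q + 1 / 2 + s)
  have hwre : w.re = d / 2 * (Q + 1 / 2 - s.re) := by simp [w]
  have hbconj : conj b = d / 2 * (Q + 1 / 2 + conj s) := by simp [b, map_ofNat]
  have hconj : conj b = w + (d * s.re : ℝ) := by
    rw [hbconj]
    apply Complex.ext <;> simp [w]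
    ring
  have hsre := abs_le.1 hs
  have key := norm_Gamma_le_mul_norm_Gamma_add_ofReal (w := w) (t := d * s.re)
    (k := 2 * n + 3) (m := m) one_half_pos (by rw [hwre]; push_cast; nlinarith) (by nlinarith)
    (by simpa [w, sub_eq_add_neg] using
      half_le_norm_mul_add_natCast (u := -s) hd1 (by simpa) (by simpa))
    (fun j => by
      rw [← hconj, ← norm_ne_zero_iff, hbconj]
      exact (one_half_pos.trans_le (half_le_norm_mul_add_natCast hd1 (by simpa) (by simpa) j)).ne')
  rw [← hconj, Gamma_conj, norm_conj, norm_conj] at key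
  refine key.trans ?_
  push_cast
  gcongr
  rw [div_le_iff₀ one_half_pos, abs_mul, abs_of_pos (by linarith : 0 < d)]
  nlinarith [abs_nonneg s.re]

theorem one_le_norm_add_add {n : ℕ} {Q : ℝ} {s : ℂ} (hQ : 0 ≤ Q) (hs : |s.re| ≤ n) :
    1 ≤ ‖(Q : ℂ) + 1 + s + 2 * n‖ := by
  have hre : ((Q : ℂ) + 1 + s + 2 * n).re = Q + 1 + s.re + 2 * n := by simp
  linarith [abs_le.1 hs, hre ▸ re_le_norm ((Q : ℂ) + 1 + s + 2 * n)]

theorem norm_half_mul_add_add_le {n m : ℕ} {d Q : ℝ} {s : ℂ} (hd0 : 0 ≤ d) (hd2 : d ≤ 2)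
    (hQ : 0 ≤ Q) (hs : |s.re| ≤ n) (hm : m ≤ 2 * n) :
    ‖(d / 2 : ℂ) * (Q + 1 / 2 + s)‖ + (2 * n + 3 + m) ≤
      (6 * n + 5) * ‖(Q : ℂ) + 1 + s + 2 * n‖ := by
  set P := ‖(Q : ℂ) + 1 + s + 2 * n‖
  have hP1 : 1 ≤ P := one_le_norm_add_add hQ hs
  have hb : ‖(d / 2 : ℂ) * (Q + 1 / 2 + s)‖ ≤ P + (2 * n + 1 / 2) := calc
    _ ≤ ‖(Q : ℂ) + 1 / 2 + s‖ := by
        rw [norm_mul, norm_div, norm_real, Real.norm_of_nonneg hd0, Complex.norm_two]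
        exact mul_le_of_le_one_left (norm_nonneg _) (by linarith)
    _ = ‖((Q : ℂ) + 1 + s + 2 * n) - (2 * n + 1 / 2 : ℝ)‖ := by congr 1; push_cast; ring
    _ ≤ P + (2 * n + 1 / 2) := by
        refine (norm_sub_le _ _).trans_eq ?_
        rw [norm_real, Real.norm_of_nonneg (by positivity)]
  have hm' : (m : ℝ) ≤ 2 * n := by exact_mod_cast hm
  nlinarith [mul_le_mul_of_nonneg_left hP1 (by positivity : (0 : ℝ) ≤ 6 * n + 4)]

theorem stmt_2_general (n : ℕ) :
    ∃ C : ℝ, 0 < C ∧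
      ∀ (d : ℕ), (d = 1 ∨ d = 2) →
      ∀ (Q : ℝ), (∃ m : ℕ, Q = m / 2) →
      ∀ s : ℂ, |s.re| ≤ (n : ℝ) →
        (3 * (n : ℝ) + 2 ≤ Q ∨ 1 ≤ |s.im|) →
        ‖Complex.Gamma ((d : ℂ) / 2 * ((Q : ℂ) + 1/2 - s))‖ ≤
          C * ‖(Q : ℂ) + 1 + s + 2 * (n : ℂ)‖ ^ (n * d + 2) *
            ‖Complex.Gamma ((d : ℂ) / 2 * ((Q : ℂ) + 1/2 + s))‖ := by
  refine ⟨(6 * n + 5) ^ (4 * n + 3), by positivity, ?_⟩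
  rintro d hd Q ⟨M, hM⟩ s hs hQs
  have hd1 : (1 : ℝ) ≤ d := by rcases hd with rfl | rfl <;> norm_num
  have hd2 : (d : ℝ) ≤ 2 := by rcases hd with rfl | rfl <;> norm_num
  have hnd : n * d ≤ 2 * n := by rcases hd with rfl | rfl <;> omega
  have hQ : 0 ≤ Q := by rw [hM]; positivity
  have key := norm_Gamma_half_mul_sub_le (m := n * d) hd1 hd2 (Nat.cast_mul n d).ge hQ hs hQs
  have hb := norm_half_mul_add_add_le (n := n) (m := n * d) (by positivity) hd2 hQ hs
    (by exact_mod_cast hnd)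
  simp only [ofReal_natCast] at key hb
  have hP1 := one_le_norm_add_add hQ hs
  calc _ ≤ _ := key
    _ ≤ (6 * n + 5) ^ (2 * n + 3) * ((6 * n + 5) * ‖(Q : ℂ) + 1 + s + 2 * (n : ℂ)‖) ^ (n * d) *
          ‖Gamma ((d : ℂ) / 2 * (Q + 1 / 2 + s))‖ := by
        gcongr ?_ ^ _ * ?_ ^ _ * _
        linarith
    _ = (6 * n + 5) ^ (2 * n + 3 + n * d) * ‖(Q : ℂ) + 1 + s + 2 * (n : ℂ)‖ ^ (n * d) *
          ‖Gamma ((d : ℂ) / 2 * (Q + 1 / 2 + s))‖ := by rw [mul_pow, pow_add]; ring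
    _ ≤ _ := by
        gcongr (6 * n + 5 : ℝ) ^ ?_ * _ ^ ?_ * _
        · linarith
        · omega
        · omega

/-- Uniform bound for the ratio of Gamma factors on the strip
`|Re s| ≤ n`, provided `Q ≥ 3n+2` or `|Im s| ≥ 1`. -/
theorem stmt_2 (n : ℕ) (hn : 0 < n) :
    ∃ C : ℝ, 0 < C ∧
      ∀ (d : ℕ), (d = 1 ∨ d = 2) →
      ∀ (Q : ℝ), (∃ m : ℕ, Q = m / 2) →
      ∀ s : ℂ, |s.re| ≤ (n : ℝ) →
        (3 * (n : ℝ) + 2 ≤ Q ∨ 1 ≤ |s.im|) →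
        ‖Complex.Gamma ((d : ℂ) / 2 * ((Q : ℂ) + 1/2 - s))‖ ≤
          C * ‖(Q : ℂ) + 1 + s + 2 * (n : ℂ)‖ ^ (n * d + 2) *
            ‖Complex.Gamma ((d : ℂ) / 2 * ((Q : ℂ) + 1/2 + s))‖ :=
  stmt_2_general n
end

section
/- Let U be a finite-dimensional real vector space equipped with a linear action of a finite group Γ (a group homomorphism from Γ to the group of linear automorphisms of U), and endow the dual space U* with the contragredient action (σ·ℓ)(u) = ℓ(σ⁻¹·u). Let χ₁, …, χ_t ∈ U* and let C := {Σᵢ tᵢχᵢ : tᵢ ∈ ℝ, tᵢ ≥ 0} be the convex cone they generate. Assume that C is stable under the Γ-action on U* and that C is strongly convex, i.e. C ∩ (−C) = {0}. Let U^Γ := {u ∈ U : σ·u = u for all σ ∈ Γ} be the subspace of invariants and let r : U* → (U^Γ)* be the map restricting a linear functional on U to U^Γ. Then the image r(C) is strongly convex: r(C) ∩ (−r(C)) = {0}. -/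
/-- If a strongly convex cone `C` in the dual of a
finite-dimensional real representation `U` of a finite group `Γ` is stable
under the contragredient action, then its image under restriction of
functionals to the invariants `U^Γ` is again strongly convex. -/
theorem stmt_6 (Γ : Type*) [Group Γ] [Finite Γ]
    (U : Type*) [AddCommGroup U] [Module ℝ U] [FiniteDimensional ℝ U]
    (ρ : Representation ℝ Γ U)
    (t : ℕ) (χ : Fin t → Module.Dual ℝ U)
    (C : Set (Module.Dual ℝ U))
    (hC : C = {ℓ | ∃ c : Fin t → ℝ, (∀ i, 0 ≤ c i) ∧ ℓ = ∑ i, c i • χ i})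
    (hstable : ∀ σ : Γ, ∀ ℓ ∈ C, ℓ.comp (ρ σ⁻¹) ∈ C)
    (hsc : ∀ ℓ ∈ C, -ℓ ∈ C → ℓ = 0) :
    ∀ y : Module.Dual ℝ ρ.invariants,
      (∃ ℓ ∈ C, ℓ.comp ρ.invariants.subtype = y) →
      (∃ ℓ ∈ C, ℓ.comp ρ.invariants.subtype = -y) →
      y = 0 := by
  rintro y ⟨ℓ₁, h1, hy1⟩ ⟨ℓ₂, h2, hy2⟩
  cases nonempty_fintype Γ
  -- 0 ∈ C and C is closed under addition
  have h0 : (0 : Module.Dual ℝ U) ∈ C := by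
    rw [hC]; exact ⟨0, fun i => le_refl 0, by simp⟩
  have hadd : ∀ a ∈ C, ∀ b ∈ C, a + b ∈ C := by
    intro a ha b hb
    rw [hC] at ha hb ⊢
    obtain ⟨c, hc, rfl⟩ := ha
    obtain ⟨d, hd, rfl⟩ := hb
    exact ⟨c + d, fun i => add_nonneg (hc i) (hd i), by
      simp [add_smul, Finset.sum_add_distrib]⟩
  -- the averaging operator
  set A : Module.Dual ℝ U → Module.Dual ℝ U :=
    fun ℓ => ∑ σ : Γ, ℓ.comp (ρ σ⁻¹) with hA
  have hAC : ∀ ℓ ∈ C, A ℓ ∈ C := by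
    intro ℓ hℓ
    exact Finset.sum_induction _ (· ∈ C) (fun a b ha hb => hadd a ha b hb) h0
      (fun σ _ => hstable σ ℓ hℓ)
  -- A ℓ is Γ-invariant
  have hAinv : ∀ ℓ (τ : Γ), (A ℓ).comp (ρ τ⁻¹) = A ℓ := by
    intro ℓ τ
    rw [hA]
    apply LinearMap.ext; intro u
    simp only [LinearMap.comp_apply, LinearMap.coe_sum, Finset.sum_apply]
    refine Fintype.sum_equiv (Equiv.mulLeft τ) _ _ (fun σ => ?_)
    rw [← Module.End.mul_apply, ← map_mul]
    simp [Equiv.coe_mulLeft, mul_inv_rev]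
  -- an invariant functional vanishing on invariants is zero
  have hzero : ∀ m : Module.Dual ℝ U, (∀ τ : Γ, m.comp (ρ τ⁻¹) = m) →
      (∀ u : ρ.invariants, m u = 0) → m = 0 := by
    intro m hinv hvan
    ext u
    have hmem : (∑ σ : Γ, ρ σ u) ∈ ρ.invariants := by
      rw [Representation.mem_invariants]
      intro τ
      rw [map_sum]
      refine Fintype.sum_equiv (Equiv.mulLeft τ) _ _ (fun σ => ?_)
      simp [Equiv.coe_mulLeft, ← Module.End.mul_apply, ← map_mul]
    have hterm : ∀ σ : Γ, m (ρ σ u) = m u := by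
      intro σ
      have := hinv σ⁻¹
      rw [inv_inv] at this
      exact congrFun (congrArg DFunLike.coe this) u
    have h1 : m (∑ σ : Γ, ρ σ u) = (Fintype.card Γ : ℝ) * m u := by
      rw [map_sum]
      simp [hterm, Finset.sum_const, nsmul_eq_mul]
    have h2 : m (∑ σ : Γ, ρ σ u) = 0 := hvan ⟨_, hmem⟩
    have hcard : (Fintype.card Γ : ℝ) ≠ 0 := by
      exact_mod_cast Fintype.card_ne_zero
    have := h1.symm.trans h2
    simpa [hcard] using this
  -- value of A ℓ on invariants
  have hAval : ∀ ℓ : Module.Dual ℝ U, ∀ u : ρ.invariants,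
      A ℓ u = (Fintype.card Γ : ℝ) * ℓ u := by
    intro ℓ u
    rw [hA]
    simp only [LinearMap.coe_sum, Finset.sum_apply, LinearMap.comp_apply]
    have : ∀ σ : Γ, ℓ (ρ σ⁻¹ (u : U)) = ℓ u := fun σ => by
      rw [u.2 σ⁻¹]
    simp [this, Finset.sum_const, nsmul_eq_mul]
  -- the sum A ℓ₁ + A ℓ₂ is invariant and vanishes on invariants
  have hm : A ℓ₁ + A ℓ₂ = 0 := by
    apply hzero
    · intro τ
      rw [LinearMap.add_comp, hAinv, hAinv]
    · intro u
      have e1 : ℓ₁ u = y u := by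
        rw [← hy1]; rfl
      have e2 : ℓ₂ u = -(y u) := by
        have := congrFun (congrArg DFunLike.coe hy2) u
        simpa using this
      simp [hAval, e1, e2]
  have hA1 : A ℓ₁ = 0 := by
    apply hsc _ (hAC ℓ₁ h1)
    have h2' : -(A ℓ₁) = A ℓ₂ := by
      rw [neg_eq_iff_add_eq_zero]
      exact hm
    rw [h2']; exact hAC ℓ₂ h2
  ext u
  have e1 : ℓ₁ u = y u := by rw [← hy1]; rfl
  have := hAval ℓ₁ u
  rw [hA1, e1] at this
  have hcard : (Fintype.card Γ : ℝ) ≠ 0 := by exact_mod_cast Fintype.card_ne_zero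
  have h0' : (0 : ℝ) = (Fintype.card Γ : ℝ) * y u := this
  simpa [hcard, eq_comm] using h0'
end

section
/- Let G be a group and H ≤ G a subgroup of finite index m. Let V be a finite-dimensional complex vector space and ρ : G → GL(V) an irreducible representation, i.e. V ≠ 0 and the only subspaces of V mapped into themselves by ρ(g) for all g ∈ G are 0 and V. Suppose there exists a one-dimensional subspace L ≤ V with ρ(h)(L) = L for all h ∈ H. Then dim_ℂ V ≤ m. -/
/-!
The translates `ρ g L` of the line `L` depend only on the coset `gH`, since `H` stabilizes `L`.
Their sum is a nonzero `G`-invariant subspace, hence all of `V` by irreducibility, and it is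
spanned by at most `[G : H]` lines.
-/

open Module

theorem Submodule.finrank_finset_sup_le_sum {K V ι : Type*} [DivisionRing K] [AddCommGroup V]
    [Module K V] [FiniteDimensional K V] (s : Finset ι) (p : ι → Submodule K V) :
    finrank K ↥(s.sup p) ≤ ∑ i ∈ s, finrank K (p i) := by
  classical
  induction s using Finset.induction with
  | empty => simp
  | insert a s ha ih =>
    rw [Finset.sup_insert, Finset.sum_insert ha]
    exact (Submodule.finrank_add_le_finrank_add_finrank _ _).trans (Nat.add_le_add_left ih _)

theorem Submodule.finrank_iSup_le_sum {K V ι : Type*} [DivisionRing K] [AddCommGroup V]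
    [Module K V] [FiniteDimensional K V] [Fintype ι] (p : ι → Submodule K V) :
    finrank K ↥(⨆ i, p i) ≤ ∑ i, finrank K (p i) := by
  rw [← Finset.sup_univ_eq_iSup]
  exact Submodule.finrank_finset_sup_le_sum _ _

namespace Representation

variable {k G V : Type*} [Field k] [Group G] [AddCommGroup V] [Module k V]
  (ρ : Representation k G V)

theorem map_map (L : Submodule k V) (g h : G) :
    (L.map (ρ h)).map (ρ g) = L.map (ρ (g * h)) := by
  rw [← Submodule.map_comp, ← Module.End.mul_eq_comp, ← map_mul]

theorem map_eq_map_out {H : Subgroup G} {L : Submodule k V}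
    (hL : ∀ h ∈ H, L.map (ρ h) = L) (g : G) :
    L.map (ρ (g : G ⧸ H).out) = L.map (ρ g) := by
  obtain ⟨h, hout⟩ := QuotientGroup.mk_out_eq_mul H g
  rw [hout, ← map_map, hL h h.2]

theorem map_le_iSup_map (L : Submodule k V) (g : G) :
    (⨆ g', L.map (ρ g')).map (ρ g) ≤ ⨆ g', L.map (ρ g') := by
  rw [Submodule.map_iSup]
  exact iSup_le fun g' => (map_map ρ L g g').le.trans (le_iSup (fun g' => L.map (ρ g')) _)

theorem finrank_iSup_map_le [FiniteDimensional k V] {H : Subgroup G} [H.FiniteIndex]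
    {L : Submodule k V} (hL : ∀ h ∈ H, L.map (ρ h) = L) :
    finrank k ↥(⨆ g, L.map (ρ g)) ≤ H.index * finrank k L := by
  have : Fintype (G ⧸ H) := Fintype.ofFinite _
  have hcosets : ⨆ g, L.map (ρ g) = ⨆ q : G ⧸ H, L.map (ρ q.out) := by
    rw [← QuotientGroup.mk_surjective.iSup_comp]
    simp only [map_eq_map_out ρ hL]
  calc finrank k ↥(⨆ g, L.map (ρ g))
      ≤ ∑ q : G ⧸ H, finrank k (L.map (ρ q.out)) :=
        hcosets ▸ Submodule.finrank_iSup_le_sum _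
    _ ≤ ∑ _q : G ⧸ H, finrank k L :=
        Finset.sum_le_sum fun q _ => Submodule.finrank_map_le _ _
    _ = H.index * finrank k L := by
        rw [Finset.sum_const, smul_eq_mul, Finset.card_univ, H.index_eq_card,
          Nat.card_eq_fintype_card]

theorem finrank_le_index_mul_of_irreducible [FiniteDimensional k V] {H : Subgroup G}
    [H.FiniteIndex]
    (hirr : ∀ W : Submodule k V, (∀ g : G, ∀ v ∈ W, ρ g v ∈ W) → W = ⊥ ∨ W = ⊤)
    {L : Submodule k V} (hL0 : L ≠ ⊥) (hL : ∀ h ∈ H, L.map (ρ h) = L) :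
    finrank k V ≤ H.index * finrank k L := by
  have hinv : ∀ g : G, ∀ v ∈ ⨆ g', L.map (ρ g'), ρ g v ∈ ⨆ g', L.map (ρ g') :=
    fun g v hv => map_le_iSup_map ρ L g ⟨v, hv, rfl⟩
  have hne : ⨆ g, L.map (ρ g) ≠ ⊥ := by
    refine ne_bot_of_le_ne_bot hL0 ?_
    simpa [Module.End.one_eq_id] using le_iSup (fun g => L.map (ρ g)) 1
  have htop := (hirr _ hinv).resolve_left hne
  rw [← finrank_top k V, ← htop]
  exact finrank_iSup_map_le ρ hL

end Representation

theorem stmt_9_general (G : Type*) [Group G] (H : Subgroup G) (m : ℕ)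
    (hm : H.index = m) (hm0 : 0 < m)
    (V : Type*) [AddCommGroup V] [Module ℂ V] [FiniteDimensional ℂ V]
    (ρ : Representation ℂ G V)
    (hirr : ∀ W : Submodule ℂ V, (∀ g : G, ∀ v ∈ W, ρ g v ∈ W) → W = ⊥ ∨ W = ⊤)
    (L : Submodule ℂ V) (hL : Module.finrank ℂ L = 1)
    (hLinv : ∀ h ∈ H, L.map (ρ h) = L) :
    Module.finrank ℂ V ≤ m := by
  have : H.FiniteIndex := ⟨by omega⟩
  have hL0 : L ≠ ⊥ := by
    rintro rfl
    simp at hL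
  simpa [hm, hL] using ρ.finrank_le_index_mul_of_irreducible hirr hL0 hLinv

/-- If an irreducible finite-dimensional complex representation
of a group `G` has a line stabilized by a subgroup `H` of finite index `m`,
then its dimension is at most `m`. -/
theorem stmt_9 (G : Type*) [Group G] (H : Subgroup G) (m : ℕ)
    (hm : H.index = m) (hm0 : 0 < m)
    (V : Type*) [AddCommGroup V] [Module ℂ V] [FiniteDimensional ℂ V]
    (ρ : Representation ℂ G V)
    (hnt : ∃ v : V, v ≠ 0)
    (hirr : ∀ W : Submodule ℂ V, (∀ g : G, ∀ v ∈ W, ρ g v ∈ W) → W = ⊥ ∨ W = ⊤)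
    (L : Submodule ℂ V) (hL : Module.finrank ℂ L = 1)
    (hLinv : ∀ h ∈ H, L.map (ρ h) = L) :
    Module.finrank ℂ V ≤ m :=
  stmt_9_general G H m hm hm0 V ρ hirr L hL hLinv
end
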